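/- For any simple graph G on n vertices with Laplacian matrix L, the matrix I + L is invertible, and det(I + L) equals the number of spanning rooted forests of G. -/

import Mathlib

/-- A spanning rooted forest of a graph `G`: a spanning acyclic subgraph (given by its
edge set) together with a set of roots containing exactly one root in each tree
(connected component). -/
structure RootedForest {V : Type*} (G : SimpleGraph V) where
  edges : Set (Sym2 V)
  roots : Set V
  edges_sub : edges ⊆ G.edgeSet
  acyclic : (SimpleGraph.fromEdgeSet edges).IsAcyclic
  unique_root : ∀ v : V, ∃! r, r ∈ roots ∧ (SimpleGraph.fromEdgeSet edges).Reachable v r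

/-!
Write row `v` of `1 + L` as `e_v + ∑_{w ~ v} (e_v - e_w)` and expand the determinant
multilinearly in the rows: `det (1 + L)` becomes a sum over all maps `f` sending each vertex to
`none` or to a neighbour, of `det (1 - N_f)`, where `N_f` is the 0/1 matrix of `f`. If following
`f` from any vertex always ends at `none`, then `N_f` is strictly triangular for the height
ordering and the term is `1`; otherwise `f` has a cycle, along which the rows of `1 - N_f` sum to
zero, and the term is `0`. The maps of the first kind are exactly the parent maps of spanning
rooted forests, with `none` marking the roots.
-/

open Finset Matrix SimpleGraph

variable {V : Type*}

theorem SimpleGraph.IsAcyclic.adj_of_le_of_reachable {H H' : SimpleGraph V} (hH : H.IsAcyclic)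
    (hle : H' ≤ H) {a b : V} (hab : H.Adj a b) (hreach : H'.Reachable a b) : H'.Adj a b := by
  by_contra hn
  refine isBridge_iff.mp (isAcyclic_iff_forall_adj_isBridge.mp hH hab)
    (hreach.mono fun x y hxy => ?_)
  refine (deleteEdges_adj ..).mpr ⟨hle hxy, fun he => hn ?_⟩
  rw [← mem_edgeSet, ← Set.mem_singleton_iff.mp he]
  exact hxy

theorem Function.exists_iterate_mem_periodicPts {α : Type*} [Finite α] (g : α → α) (x : α) :
    ∃ m, g^[m] x ∈ periodicPts g := by
  obtain ⟨a, b, hne, heq⟩ := Finite.exists_ne_map_eq_of_infinite fun m => g^[m] x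
  wlog hab : a < b generalizing a b
  · exact this b a hne.symm heq.symm (by omega)
  refine ⟨a, mk_mem_periodicPts (Nat.sub_pos_of_lt hab) ?_⟩
  change g^[b - a] (g^[a] x) = g^[a] x
  rw [← Function.iterate_add_apply, Nat.sub_add_cancel hab.le]
  exact heq.symm

namespace Matrix

variable {ι R : Type*} [Fintype ι] [DecidableEq ι] [CommRing R]

theorem det_one_add_eq_one_of_strictly_upper {α : Type*} [LinearOrder α] (b : ι → α)
    {N : Matrix ι ι R} (hN : ∀ i j, b j ≤ b i → N i j = 0) : (1 + N).det = 1 := by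
  have htri : (1 + N).BlockTriangular b := fun i j hij => by
    simp [hN i j hij.le, one_apply_ne (ne_of_apply_ne b hij.ne')]
  rw [htri.det]
  refine Finset.prod_eq_one fun a _ => ?_
  have hblock : (1 + N).toSquareBlock b a = 1 := by
    ext ⟨i, hi⟩ ⟨j, hj⟩
    simp [toSquareBlock_def, hN i j (hj.trans hi.symm).le, one_apply]
  rw [hblock, det_one]

theorem det_eq_zero_of_sum_rows_eq_zero {A : Matrix ι ι R} {s : Finset ι} {j : ι} (hj : j ∈ s)
    (h : ∑ i ∈ s, A i = 0) : A.det = 0 := by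
  have hsum : ∑ i, (if i ∈ s then (1 : R) else 0) • A i = 0 := by
    simp only [ite_smul, one_smul, zero_smul]
    exact (Fintype.sum_ite_mem s _).trans h
  have := det_updateRow_sum A j fun i => if i ∈ s then 1 else 0
  rw [hsum, if_pos hj, one_smul] at this
  rw [← this]
  exact det_eq_zero_of_row_eq_zero j fun _ => by simp

end Matrix

namespace RootedForest

def parentStep (f : V → Option V) (v : V) : V := (f v).getD v

theorem apply_eq_some_parentStep {f : V → Option V} {v : V} (h : f v ≠ none) :
    f v = some (parentStep f v) := by
  obtain ⟨w, hw⟩ := Option.ne_none_iff_exists'.mp h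
  rw [parentStep, hw, Option.getD_some]

/-- `f v = none` makes `v` a root and `f v = some w` makes `w` the parent of `v`; such an `f`
describes a rooted forest exactly when following parents always ends at a root. -/
def Terminates (f : V → Option V) : Prop := ∀ v, ∃ m, f ((parentStep f)^[m] v) = none

theorem terminates_of_lt {f : V → Option V} (d : V → ℕ)
    (hd : ∀ ⦃v w⦄, f v = some w → d w < d v) : Terminates f := by
  intro v
  induction hk : d v using Nat.strong_induction_on generalizing v with
  | _ k ih =>
    cases h : f v with
    | none => exact ⟨0, h⟩
    | some w =>
      obtain ⟨m, hm⟩ := ih (d w) (hk ▸ hd h) w rfl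
      refine ⟨m + 1, ?_⟩
      rwa [Function.iterate_succ_apply, parentStep, h, Option.getD_some]

namespace Terminates

variable {f : V → Option V} (hf : Terminates f)

noncomputable def height (v : V) : ℕ := Nat.find (hf v)

noncomputable def root (v : V) : V := (parentStep f)^[hf.height v] v

theorem height_eq_zero {v : V} (h : f v = none) : hf.height v = 0 :=
  (Nat.find_eq_zero _).mpr h

theorem apply_root (v : V) : f (hf.root v) = none := Nat.find_spec (hf v)

theorem height_eq_succ {v w : V} (h : f v = some w) : hf.height v = hf.height w + 1 := by
  have hstep : parentStep f v = w := by rw [parentStep, h, Option.getD_some]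
  have hw : f ((parentStep f)^[hf.height w + 1] v) = none := by
    rw [Function.iterate_succ_apply, hstep]
    exact hf.apply_root w
  rw [height, Nat.find_comp_succ _ ⟨_, hw⟩ (by simp [h])]
  exact congrArg (· + 1) (Nat.find_congr' (by simp [hstep]))

theorem height_lt {v w : V} (h : f v = some w) : hf.height w < hf.height v := by
  rw [hf.height_eq_succ h]; exact Nat.lt_succ_self _

theorem ne_of_eq_some (hf : Terminates f) {v w : V} (h : f v = some w) : v ≠ w := by
  rintro rfl; exact (hf.height_lt h).false

theorem root_eq_self {v : V} (h : f v = none) : hf.root v = v := by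
  rw [root, hf.height_eq_zero h, Function.iterate_zero_apply]

theorem root_eq_root {v w : V} (h : f v = some w) : hf.root v = hf.root w := by
  rw [root, hf.height_eq_succ h, Function.iterate_succ_apply, parentStep, h, Option.getD_some]
  rfl

theorem induction (hf : Terminates f) {P : V → Prop} (base : ∀ v, f v = none → P v)
    (step : ∀ v w, f v = some w → P w → P v) (v : V) : P v := by
  induction hk : hf.height v using Nat.strong_induction_on generalizing v with
  | _ k ih =>
    cases h : f v with
    | none => exact base v h
    | some w => exact step v w h (ih _ (hk ▸ hf.height_lt h) w rfl)

end Terminates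

def parentEdges (f : V → Option V) : Set (Sym2 V) := {e | ∃ v w, f v = some w ∧ s(v, w) = e}

abbrev parentGraph (f : V → Option V) : SimpleGraph V := fromEdgeSet (parentEdges f)

variable {f : V → Option V}

theorem Terminates.parentGraph_adj (hf : Terminates f) {a b : V} :
    (parentGraph f).Adj a b ↔ f a = some b ∨ f b = some a := by
  simp only [fromEdgeSet_adj, parentEdges, Set.mem_ofPred_eq, Sym2.eq_iff]
  constructor
  · rintro ⟨⟨v, w, h, ⟨rfl, rfl⟩ | ⟨rfl, rfl⟩⟩, -⟩
    exacts [Or.inl h, Or.inr h]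
  · rintro (h | h)
    exacts [⟨⟨a, b, h, .inl ⟨rfl, rfl⟩⟩, hf.ne_of_eq_some h⟩,
      ⟨⟨b, a, h, .inr ⟨rfl, rfl⟩⟩, (hf.ne_of_eq_some h).symm⟩]

namespace Terminates

variable (hf : Terminates f)

theorem root_eq_of_reachable {a b : V} (h : (parentGraph f).Reachable a b) :
    hf.root a = hf.root b := by
  obtain ⟨p⟩ := h
  induction p with
  | nil => rfl
  | cons hadj _ ih =>
    refine Eq.trans ?_ ih
    rcases hf.parentGraph_adj.mp hadj with h | h
    exacts [hf.root_eq_root h, (hf.root_eq_root h).symm]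

theorem exists_isPath_root {H : SimpleGraph V} (hH : ∀ ⦃v w⦄, f v = some w → H.Adj v w)
    (v : V) : ∃ p : H.Walk v (hf.root v), p.IsPath ∧ ∀ w, f v = some w → p.snd = w := by
  suffices ∀ v, ∃ p : H.Walk v (hf.root v),
      p.IsPath ∧ (∀ u ∈ p.support, hf.height u ≤ hf.height v) ∧ ∀ w, f v = some w → p.snd = w by
    obtain ⟨p, hp, -, hsnd⟩ := this v
    exact ⟨p, hp, hsnd⟩
  refine hf.induction (fun v h => ?_) (fun v w h ih => ?_)
  · rw [hf.root_eq_self h]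
    exact ⟨.nil, .nil, by simp, by simp [h]⟩
  · obtain ⟨p, hp, hsupp, -⟩ := ih
    have hv : v ∉ p.support := fun hv => (hsupp v hv).not_gt (hf.height_lt h)
    rw [hf.root_eq_root h]
    refine ⟨.cons (hH h) p, hp.cons hv, ?_, by simp [h]⟩
    simp only [Walk.support_cons, List.mem_cons, forall_eq_or_imp, le_refl, true_and]
    exact fun u hu => (hsupp u hu).trans (hf.height_lt h).le

theorem reachable_root (v : V) : (parentGraph f).Reachable v (hf.root v) :=
  let ⟨p, _⟩ := hf.exists_isPath_root (fun _ _ h => hf.parentGraph_adj.mpr (.inl h)) v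
  ⟨p⟩

theorem isAcyclic (hf : Terminates f) : (parentGraph f).IsAcyclic := by
  classical
  intro u c hc
  obtain ⟨x, hx, hmax⟩ := c.support.toFinset.exists_max_image hf.height ⟨u, by simp⟩
  simp only [List.mem_toFinset] at hx hmax
  -- a neighbour of a highest vertex of the cycle cannot be its child, so it is its parent
  have hparent : ∀ y ∈ (c.rotate x hx).support, (parentGraph f).Adj x y → f x = some y := by
    intro y hy hxy
    rcases hf.parentGraph_adj.mp hxy with h | h
    · exact h
    · have := hmax y ((c.mem_support_rotate_iff x hx).mp hy)
      exact absurd (hf.height_lt h) this.not_gt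
  have hc' := hc.rotate hx
  refine hc'.snd_ne_penultimate (Option.some_injective _ ?_)
  rw [← hparent _ ((c.rotate x hx).getVert_mem_support 1) ((c.rotate x hx).adj_snd hc'.not_nil),
    hparent _ ((c.rotate x hx).getVert_mem_support _)
      ((c.rotate x hx).adj_penultimate hc'.not_nil).symm]

end Terminates

section Forest

variable {G : SimpleGraph V}

theorem ext {F F' : RootedForest G} (he : F.edges = F'.edges) (hr : F.roots = F'.roots) :
    F = F' := by
  cases F; cases F'; congr

def ofParentMap (hG : ∀ ⦃v w⦄, f v = some w → G.Adj v w) (hf : Terminates f) :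
    RootedForest G where
  edges := parentEdges f
  roots := {v | f v = none}
  edges_sub := by
    rintro _ ⟨v, w, h, rfl⟩
    exact hG h
  acyclic := hf.isAcyclic
  unique_root v := ⟨hf.root v, ⟨hf.apply_root v, hf.reachable_root v⟩, fun r ⟨hr, hvr⟩ => by
    rw [hf.root_eq_of_reachable hvr, hf.root_eq_self hr]⟩

-- The two parent chains from `v` are paths to the same root, so in the acyclic graph they agree.
theorem Terminates.eq_of_parentEdges_eq {g : V → Option V} (hf : Terminates f) (hg : Terminates g)
    (hE : parentEdges f = parentEdges g) (hR : ∀ v, f v = none ↔ g v = none) : f = g := by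
  funext v
  cases hv : f v with
  | none => exact ((hR v).mp hv).symm
  | some w =>
    obtain ⟨w', hw'⟩ : ∃ w', g v = some w' :=
      Option.ne_none_iff_exists'.mp fun h => by simp [(hR v).mpr h] at hv
    have hgH : ∀ ⦃a b⦄, g a = some b → (parentGraph f).Adj a b := fun a b h => by
      rw [parentGraph, hE]
      exact hg.parentGraph_adj.mpr (.inl h)
    obtain ⟨q, hq, hqw⟩ := hg.exists_isPath_root hgH v
    have hroot : hf.root v = hg.root v := by
      rw [hf.root_eq_of_reachable ⟨q⟩, hf.root_eq_self ((hR _).mpr (hg.apply_root v))]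
    obtain ⟨p, hp, hpw⟩ : ∃ p : (parentGraph f).Walk v (hg.root v),
        p.IsPath ∧ ∀ w, f v = some w → p.snd = w :=
      hroot ▸ hf.exists_isPath_root (fun _ _ h => hf.parentGraph_adj.mpr (.inl h)) v
    have hpq : p = q :=
      congrArg Subtype.val ((hf.isAcyclic.subsingleton_path _ _).elim ⟨p, hp⟩ ⟨q, hq⟩)
    rw [hw', ← hpw w hv, hpq, hqw w' hw']

abbrev graph (F : RootedForest G) : SimpleGraph V := fromEdgeSet F.edges

variable (F : RootedForest G)

noncomputable def root (v : V) : V := (F.unique_root v).exists.choose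

theorem root_mem (v : V) : F.root v ∈ F.roots := (F.unique_root v).exists.choose_spec.1

theorem reachable_root (v : V) : F.graph.Reachable v (F.root v) :=
  (F.unique_root v).exists.choose_spec.2

theorem eq_root {v r : V} (hr : r ∈ F.roots) (h : F.graph.Reachable v r) : r = F.root v :=
  (F.unique_root v).unique ⟨hr, h⟩ ⟨F.root_mem v, F.reachable_root v⟩

theorem root_eq_of_adj {a b : V} (h : F.graph.Adj a b) : F.root a = F.root b :=
  (F.eq_root (F.root_mem b) (h.reachable.trans (F.reachable_root b))).symm

theorem exists_adj_dist_lt {v : V} (hv : v ∉ F.roots) :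
    ∃ w, F.graph.Adj v w ∧ F.graph.dist w (F.root w) < F.graph.dist v (F.root v) := by
  obtain ⟨p, hp⟩ := (F.reachable_root v).exists_walk_length_eq_dist
  have hnil : ¬ p.Nil := Walk.not_nil_of_ne fun h => hv (h ▸ F.root_mem v)
  refine ⟨p.snd, p.adj_snd hnil, ?_⟩
  rw [← F.root_eq_of_adj (p.adj_snd hnil), ← hp, ← p.length_tail_add_one hnil]
  exact Nat.lt_succ_of_le (dist_le p.tail)

/-- Orient every edge towards the root of its tree. The forest of the resulting parent map lies
inside `F` and links each vertex to its root, so, `F` being acyclic, it is all of `F`. -/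
theorem exists_ofParentMap_eq :
    ∃ f, ∃ (hG : ∀ ⦃v w⦄, f v = some w → G.Adj v w) (hf : Terminates f),
      ofParentMap hG hf = F := by
  classical
  choose! par hpar using fun v (hv : v ∉ F.roots) => F.exists_adj_dist_lt hv
  let f : V → Option V := fun v => if v ∈ F.roots then none else some (par v)
  have hf_none : ∀ v, f v = none ↔ v ∈ F.roots := by simp [f]
  have hf_some : ∀ ⦃v w⦄, f v = some w →
      F.graph.Adj v w ∧ F.graph.dist w (F.root w) < F.graph.dist v (F.root v) := by
    intro v w h
    simp only [f] at h
    split_ifs at h with hv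
    cases h
    exact hpar v hv
  have hf : Terminates f := terminates_of_lt _ fun v w h => (hf_some h).2
  have hle : parentGraph f ≤ F.graph := fun a b hab => by
    rcases hf.parentGraph_adj.mp hab with h | h
    exacts [(hf_some h).1, (hf_some h).1.symm]
  have hroot : ∀ v, hf.root v = F.root v := fun v =>
    F.eq_root ((hf_none _).mp (hf.apply_root v)) ((hf.reachable_root v).mono hle)
  refine ⟨f, fun v w h => F.edges_sub ((fromEdgeSet_adj _).mp (hf_some h).1).1, hf,
    ext (subset_antisymm ?_ fun e he => ?_) (Set.ext hf_none)⟩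
  · rintro _ ⟨v, w, h, rfl⟩
    exact ((fromEdgeSet_adj _).mp (hf_some h).1).1
  · induction e using Sym2.ind with | _ a b => ?_
    have hab : F.graph.Adj a b := (fromEdgeSet_adj _).mpr ⟨he, G.ne_of_adj (F.edges_sub he)⟩
    have hreach : (parentGraph f).Reachable a b := by
      refine (hf.reachable_root a).trans ?_
      rw [hroot, F.root_eq_of_adj hab, ← hroot]
      exact (hf.reachable_root b).symm
    exact ((fromEdgeSet_adj _).mp (F.acyclic.adj_of_le_of_reachable hle hab hreach)).1

end Forest

section Count

variable (G : SimpleGraph V)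

instance [Finite V] : Finite (RootedForest G) :=
  Finite.of_injective (fun F => (F.edges, F.roots)) fun _ _ h =>
    ext (congrArg Prod.fst h) (congrArg Prod.snd h)

instance : Nonempty (RootedForest G) :=
  ⟨ofParentMap (f := fun _ => none) (by simp) fun _ => ⟨0, rfl⟩⟩

variable [Fintype V] [DecidableEq V] [DecidableRel G.Adj]

theorem mem_piFinset_insertNone_neighborFinset {f : V → Option V} :
    f ∈ Fintype.piFinset (fun v => (G.neighborFinset v).insertNone) ↔
      ∀ ⦃v w⦄, f v = some w → G.Adj v w := by
  simp [Fintype.mem_piFinset, Finset.mem_insertNone]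

open Classical in
theorem card_eq_card_filter_terminates :
    Nat.card (RootedForest G) =
      #{f ∈ Fintype.piFinset (fun v => (G.neighborFinset v).insertNone) | Terminates f} := by
  rw [← Nat.card_eq_finsetCard]
  refine (Nat.card_eq_of_bijective (fun f => ofParentMap
    ((mem_piFinset_insertNone_neighborFinset G).mp (mem_filter.mp f.2).1) (mem_filter.mp f.2).2)
    ⟨fun f g h => Subtype.ext ?_, fun F => ?_⟩).symm
  · exact Terminates.eq_of_parentEdges_eq (mem_filter.mp f.2).2 (mem_filter.mp g.2).2
      (congrArg edges h) fun v => Set.ext_iff.mp (congrArg roots h) v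
  · obtain ⟨f, hG, hf, rfl⟩ := exists_ofParentMap_eq F
    exact ⟨⟨f, mem_filter.mpr ⟨(mem_piFinset_insertNone_neighborFinset G).mpr hG, hf⟩⟩, rfl⟩

end Count

section Determinant

variable (R : Type*)

def parentMatrix [DecidableEq V] [Zero R] [One R] (f : V → Option V) : Matrix V V R :=
  of fun v w => if f v = some w then 1 else 0

variable [CommRing R] [DecidableEq V]

theorem one_sub_parentMatrix_row {v w : V} (h : f v = some w) :
    (1 - parentMatrix R f) v = Pi.single v 1 - Pi.single w 1 := by
  ext u
  simp [parentMatrix, h, one_apply, Pi.single_apply, eq_comm]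

variable [Fintype V]

theorem Terminates.det_one_sub_parentMatrix (hf : Terminates f) :
    (1 - parentMatrix R f).det = 1 := by
  rw [sub_eq_add_neg]
  refine det_one_add_eq_one_of_strictly_upper (fun v => OrderDual.toDual (hf.height v))
    fun v w hvw => ?_
  have : f v ≠ some w := fun h => (hf.height_lt h).not_ge hvw
  simp [parentMatrix, this]

theorem det_one_sub_parentMatrix_of_not_terminates (hf : ¬ Terminates f) :
    (1 - parentMatrix R f).det = 0 := by
  obtain ⟨v, hv⟩ := not_forall.mp hf
  push Not at hv
  set g := parentStep f
  obtain ⟨m, hm⟩ := Function.exists_iterate_mem_periodicPts g v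
  set x := g^[m] v
  have hstep : ∀ k, f (g^[k] x) = some (g^[k + 1] x) := fun k => by
    rw [Function.iterate_succ_apply']
    exact apply_eq_some_parentStep (Function.iterate_add_apply g k m v ▸ hv (k + m))
  set p := Function.minimalPeriod g x
  have hp : 0 < p := Function.minimalPeriod_pos_of_mem_periodicPts hm
  refine det_eq_zero_of_sum_rows_eq_zero (s := (Finset.range p).image (g^[·] x))
    (Finset.mem_image.mpr ⟨0, Finset.mem_range.mpr hp, rfl⟩) ?_
  rw [Finset.sum_image (f := fun v => (1 - parentMatrix R f) v) fun a ha b hb h =>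
    Function.iterate_injOn_Iio_minimalPeriod (Finset.mem_range.mp ha) (Finset.mem_range.mp hb) h]
  simp_rw [one_sub_parentMatrix_row R (hstep _)]
  rw [Finset.sum_range_sub', Function.iterate_minimalPeriod, Function.iterate_zero_apply, sub_self]

variable (G : SimpleGraph V) [DecidableRel G.Adj]

-- Row `v` of `1 - parentMatrix R fun _ => c` is `e_v`, or `e_v - e_w` when `c = some w`.
theorem one_add_lapMatrix_row (v : V) :
    (1 + G.lapMatrix R) v =
      ∑ c ∈ (G.neighborFinset v).insertNone, (1 - parentMatrix R fun _ => c) v := by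
  ext u
  rw [Finset.sum_apply, Finset.sum_insertNone]
  simp [parentMatrix, lapMatrix, degMatrix, one_apply, diagonal_apply]

theorem det_one_add_lapMatrix_eq_sum :
    (1 + G.lapMatrix R).det = ∑ f ∈ Fintype.piFinset (fun v => (G.neighborFinset v).insertNone),
      (1 - parentMatrix R f).det :=
  calc (1 + G.lapMatrix R).det
      = detRowAlternating fun v =>
          ∑ c ∈ (G.neighborFinset v).insertNone, (1 - parentMatrix R fun _ => c) v :=
        congrArg det (funext (one_add_lapMatrix_row R G))
    _ = _ := MultilinearMap.map_sum_finset _ _ _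

theorem det_one_add_lapMatrix : (1 + G.lapMatrix R).det = Nat.card (RootedForest G) := by
  classical
  rw [det_one_add_lapMatrix_eq_sum, card_eq_card_filter_terminates, Finset.card_filter,
    Nat.cast_sum]
  refine Finset.sum_congr rfl fun f _ => ?_
  by_cases hf : Terminates f
  · simp [hf, hf.det_one_sub_parentMatrix R]
  · simp [hf, det_one_sub_parentMatrix_of_not_terminates R hf]

end Determinant

end RootedForest

theorem matrix_forest_theorem_det_general {n : ℕ} (G : SimpleGraph (Fin n))
    [DecidableRel G.Adj] :
    IsUnit (1 + G.lapMatrix ℝ) ∧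
      (1 + G.lapMatrix ℝ).det = (Nat.card (RootedForest G) : ℝ) := by
  have hdet := RootedForest.det_one_add_lapMatrix ℝ G
  refine ⟨?_, hdet⟩
  rw [Matrix.isUnit_iff_isUnit_det, hdet, isUnit_iff_ne_zero, Nat.cast_ne_zero]
  exact Nat.card_pos.ne'

theorem matrix_forest_theorem_det {n : ℕ} (hn : 1 ≤ n) (G : SimpleGraph (Fin n))
    [DecidableRel G.Adj] :
    IsUnit (1 + G.lapMatrix ℝ) ∧
      (1 + G.lapMatrix ℝ).det = (Nat.card (RootedForest G) : ℝ) :=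
  matrix_forest_theorem_det_general G
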